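/- Under the hypotheses of the kOPA optimality theorem (w̃ optimal over 𝒮 = {a₁,…,a_k}, s̃ = ∑ w̃ᵢ zᵢ ≠ 0, δ = arg s̃), no e^{-iδ} zᵢ lies on the common boundary of two cones: there do not exist i and indices j ≠ l such that Re((aⱼ - aₘ) e^{-iδ} zᵢ) ≥ 0 for all m ≠ j and Re((a_l - aₘ) e^{-iδ} zᵢ) ≥ 0 for all m ≠ l. -/

import Mathlib

/-!
If `w` is optimal and `x ∈ 𝒮`, then replacing `w i` by `x` moves the sum `s` by
`c = (x - w i) z i`, and `‖s + c‖² = ‖s‖² + 2 Re(s̄ c) + ‖c‖² ≤ ‖s‖²`. Hence `Re(s̄ c) ≥ 0`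
forces `c = 0`, i.e. `w i = x`. The cone condition at `j` says exactly that `Re(s̄ c) ≥ 0` for
`x = a j`, so a point on the boundary of the cones of `j ≠ l` would force `a j = w i = a l`.
-/

open ComplexConjugate

theorem eq_zero_of_norm_add_le_of_re_inner_nonneg {𝕜 E : Type*} [RCLike 𝕜]
    [NormedAddCommGroup E] [InnerProductSpace 𝕜 E] {x y : E}
    (hle : ‖x + y‖ ≤ ‖x‖) (hxy : 0 ≤ RCLike.re (inner 𝕜 x y)) : y = 0 := by
  have hsq : ‖x + y‖ ^ 2 ≤ ‖x‖ ^ 2 := pow_le_pow_left₀ (norm_nonneg _) hle 2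
  rw [norm_add_sq (𝕜 := 𝕜)] at hsq
  have : ‖y‖ ^ 2 ≤ 0 := by linarith
  exact norm_eq_zero.mp (pow_eq_zero_iff two_ne_zero |>.mp (le_antisymm this (sq_nonneg _)))

theorem sum_update_mul {ι R : Type*} [Fintype ι] [DecidableEq ι] [CommRing R]
    (w z : ι → R) (i : ι) (x : R) :
    ∑ j, Function.update w i x j * z j = ∑ j, w j * z j + (x - w i) * z i := by
  rw [← Finset.add_sum_erase _ _ (Finset.mem_univ i),
    ← Finset.add_sum_erase _ _ (Finset.mem_univ i), Function.update_self]
  rw [Finset.sum_congr rfl fun j hj => by rw [Function.update_of_ne (Finset.ne_of_mem_erase hj)]]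
  ring

theorem eq_of_forall_update_norm_sum_le {ι : Type*} [Fintype ι] {S : Set ℂ} {z w : ι → ℂ}
    (hw : ∀ i, w i ∈ S)
    (hopt : ∀ v : ι → ℂ, (∀ i, v i ∈ S) → ‖∑ i, v i * z i‖ ≤ ‖∑ i, w i * z i‖)
    {i : ι} (hzi : z i ≠ 0) {x : ℂ} (hx : x ∈ S)
    (hre : 0 ≤ (conj (∑ i, w i * z i) * ((x - w i) * z i)).re) : w i = x := by
  classical
  have hle := hopt (Function.update w i x)
    (Function.forall_update_iff w (p := fun _ y => y ∈ S) |>.mpr ⟨hx, fun j _ => hw j⟩)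
  rw [sum_update_mul] at hle
  have hzero := eq_zero_of_norm_add_le_of_re_inner_nonneg (𝕜 := ℂ) hle
    (by rwa [RCLike.inner_apply'])
  exact (sub_eq_zero.mp ((mul_eq_zero.mp hzero).resolve_right hzi)).symm

theorem stmt9 (n k : ℕ) (z : Fin n → ℂ) (hz : ∀ i, z i ≠ 0)
    (a : Fin k → ℂ) (ha : Function.Injective a)
    (w : Fin n → ℂ) (hw : ∀ i, ∃ j, w i = a j)
    (hopt : ∀ v : Fin n → ℂ, (∀ i, ∃ j, v i = a j) →
      ‖∑ i, v i * z i‖ ≤ ‖∑ i, w i * z i‖)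
    (hs : (∑ i, w i * z i) ≠ 0) :
    ¬ ∃ (i : Fin n) (j l : Fin k), j ≠ l ∧
      (∀ m, m ≠ j →
        0 ≤ ((a j - a m) *
          ((starRingEnd ℂ) (∑ i, w i * z i) / ((‖∑ i, w i * z i‖ : ℝ) : ℂ)) *
          z i).re) ∧
      (∀ m, m ≠ l →
        0 ≤ ((a l - a m) *
          ((starRingEnd ℂ) (∑ i, w i * z i) / ((‖∑ i, w i * z i‖ : ℝ) : ℂ)) *
          z i).re) := by
  rintro ⟨i, j, l, hjl, hj, hl⟩
  set s := ∑ i, w i * z i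
  have hcone : ∀ j, (∀ m, m ≠ j → 0 ≤ ((a j - a m) * (conj s / (‖s‖ : ℂ)) * z i).re) →
      w i = a j := by
    intro j hj
    obtain ⟨m, hm⟩ := hw i
    refine eq_of_forall_update_norm_sum_le (S := {x | ∃ j, x = a j}) hw hopt (hz i)
      ⟨j, rfl⟩ ?_
    rcases eq_or_ne m j with rfl | hmj
    · simp [hm]
    · have hre := hj m hmj
      rwa [show (a j - a m) * (conj s / (‖s‖ : ℂ)) * z i = conj s * ((a j - a m) * z i) / ‖s‖ by
        ring, Complex.div_ofReal_re, le_div_iff₀ (norm_pos_iff.mpr hs), zero_mul, ← hm] at hre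
  exact hjl (ha ((hcone j hj).symm.trans (hcone l hl)))
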